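/- arXiv:1002.0179 — 2 statements merged into one kernel-verified Lean document; each statement's English description precedes it below -/
import Mathlib

section
/- Let D be an integral domain, n ≥ 2, s ∈ D^n, g an annihilator of s with g(0) ≠ 0, and h a polynomial annihilating (s_2,…,s_n) but not annihilating s. Then deg(g) ≥ n - deg(h). -/
/-!
Suppose `deg g + deg h < n`. Since `h` annihilates `s_2, …, s_n` but not `s`, its only nonzero
window sum is the first one, `Δ = h_0 s_1 + ⋯ + h_e s_{e+1}`. Expanding
`∑_{i,k} g_i h_k s_{1+i+k}` along the coefficients of `g` leaves only `g_0 Δ`, while expanding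
it along the coefficients of `h` gives a combination of window sums of `g` inside `s_1, …, s_n`,
which all vanish. Hence `g(0) Δ = 0`, impossible in a domain.
-/

open Polynomial

/-- `f` annihilates the finite sequence `s 1, …, s n`:
`f = 0` or `f_0 s_{j-d} + ⋯ + f_d s_j = 0` for all `d+1 ≤ j ≤ n`, where `d = deg f`. -/
def Annihilates {D : Type*} [CommRing D] (n : ℕ) (s : ℕ → D) (f : Polynomial D) : Prop :=
  f = 0 ∨ ∀ j : ℕ, f.natDegree + 1 ≤ j → j ≤ n →
    ∑ k ∈ Finset.range (f.natDegree + 1), f.coeff k * s (j - f.natDegree + k) = 0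

/-- Linear complexity: minimal degree of a nonzero annihilator of `s 1, …, s n`. -/
noncomputable def LC {D : Type*} [CommRing D] (n : ℕ) (s : ℕ → D) : ℕ :=
  sInf {d | ∃ f : Polynomial D, f ≠ 0 ∧ Annihilates n s f ∧ f.natDegree = d}

/-- A minimal polynomial: a nonzero annihilator of minimal degree. -/
def IsMinPoly {D : Type*} [CommRing D] (n : ℕ) (s : ℕ → D) (μ : Polynomial D) : Prop :=
  μ ≠ 0 ∧ Annihilates n s μ ∧ μ.natDegree = LC n s

/-- Discrepancy `Δ(f, s) = Σ_{k=0}^{d} f_k s_{n-d+k}` where `d = deg f`. -/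
def Disc {D : Type*} [CommRing D] (n : ℕ) (s : ℕ → D) (f : Polynomial D) : D :=
  ∑ k ∈ Finset.range (f.natDegree + 1), f.coeff k * s (n - f.natDegree + k)

/-- The polynomial part `f_2` of the Laurent product `f · (s_1 x^{-1} + ⋯ + s_n x^{-n})`. -/
noncomputable def polyPart {D : Type*} [CommRing D] (n : ℕ) (s : ℕ → D) (f : Polynomial D) :
    Polynomial D :=
  ∑ j ∈ Finset.range f.natDegree,
    Polynomial.C (∑ m ∈ Finset.Icc 1 n, f.coeff (j + m) * s m) * Polynomial.X ^ j

/-- The coefficient of `x^j` (for `j : ℤ`) in the Laurent product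
`f · (s_1 x^{-1} + ⋯ + s_n x^{-n})`. -/
def laurentCoeff {D : Type*} [CommRing D] (n : ℕ) (s : ℕ → D) (f : Polynomial D) (j : ℤ) : D :=
  ∑ m ∈ Finset.Icc 1 n, if 0 ≤ j + (m : ℤ) then f.coeff (j + (m : ℤ)).toNat * s m else 0

open Finset

namespace Polynomial

def windowSum {R : Type*} [Semiring R] (f : R[X]) (s : ℕ → R) (a : ℕ) : R :=
  ∑ k ∈ range (f.natDegree + 1), f.coeff k * s (a + k)

theorem windowSum_shift {R : Type*} [Semiring R] (f : R[X]) (s : ℕ → R) (a : ℕ) :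
    windowSum f (fun j => s (j + 1)) a = windowSum f s (a + 1) := by
  simp only [windowSum, Nat.add_right_comm]

theorem sum_coeff_mul_windowSum_comm {R : Type*} [CommSemiring R] (g h : R[X]) (s : ℕ → R)
    (a : ℕ) :
    ∑ i ∈ range (g.natDegree + 1), g.coeff i * windowSum h s (a + i) =
      ∑ k ∈ range (h.natDegree + 1), h.coeff k * windowSum g s (a + k) := by
  simp only [windowSum, mul_sum]
  rw [sum_comm]
  refine sum_congr rfl fun k _ => sum_congr rfl fun i _ => ?_
  rw [Nat.add_right_comm]
  ring

end Polynomial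

section Annihilates

variable {R : Type*} [CommRing R] {n : ℕ} {s : ℕ → R} {f : R[X]}

theorem annihilates_iff_windowSum :
    Annihilates n s f ↔ ∀ a, 1 ≤ a → a + f.natDegree ≤ n → windowSum f s a = 0 := by
  constructor
  · rintro (rfl | hf) a ha hle
    · simp [windowSum]
    · simpa [windowSum, Nat.add_sub_cancel] using hf (a + f.natDegree) (by omega) hle
  · intro hf
    refine Or.inr fun j hj hjn => ?_
    simpa [windowSum] using hf (j - f.natDegree) (by omega) (by omega)

theorem annihilates_of_tail (hf : Annihilates (n - 1) (fun j => s (j + 1)) f)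
    (h₁ : windowSum f s 1 = 0) : Annihilates n s f := by
  rw [annihilates_iff_windowSum] at hf ⊢
  intro a ha hle
  obtain rfl | ha₂ := ha.eq_or_lt
  · exact h₁
  · simpa [windowSum_shift, Nat.sub_add_cancel ha₂.le] using
      hf (a - 1) (by omega) (by omega)

end Annihilates

theorem stmt_5_general {D : Type*} [CommRing D] [IsDomain D] (n : ℕ) (s : ℕ → D)
    (g h : Polynomial D) (hg : Annihilates n s g) (hg0 : g.eval 0 ≠ 0)
    (hh : Annihilates (n - 1) (fun j => s (j + 1)) h) (hh' : ¬ Annihilates n s h) :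
    (n : ℤ) - h.natDegree ≤ g.natDegree := by
  by_contra hlt
  have hΔ : windowSum h s 1 ≠ 0 := fun h₁ => hh' (annihilates_of_tail hh h₁)
  rw [annihilates_iff_windowSum] at hg hh
  have key : g.coeff 0 * windowSum h s 1 = 0 :=
    calc g.coeff 0 * windowSum h s 1
        = ∑ i ∈ range (g.natDegree + 1), g.coeff i * windowSum h s (1 + i) := by
          rw [sum_eq_single_of_mem 0 (mem_range.2 (Nat.succ_pos _)) fun i hi hi0 => ?_]
          rw [mem_range] at hi
          rw [Nat.add_comm 1 i, ← windowSum_shift, hh i (by omega) (by omega), mul_zero]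
      _ = ∑ k ∈ range (h.natDegree + 1), h.coeff k * windowSum g s (1 + k) :=
          sum_coeff_mul_windowSum_comm g h s 1
      _ = 0 := sum_eq_zero fun k hk => by
          rw [mem_range] at hk
          rw [hg (1 + k) (by omega) (by omega), mul_zero]
  rw [coeff_zero_eq_eval_zero] at key
  exact mul_ne_zero hg0 hΔ key

theorem stmt_5 {D : Type*} [CommRing D] [IsDomain D] (n : ℕ) (hn : 2 ≤ n) (s : ℕ → D)
    (g h : Polynomial D) (hg : Annihilates n s g) (hg0 : g.eval 0 ≠ 0)
    (hh : Annihilates (n - 1) (fun j => s (j + 1)) h) (hh' : ¬ Annihilates n s h) :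
    (n : ℤ) - h.natDegree ≤ g.natDegree :=
  stmt_5_general n s g h hg hg0 hh hh'
end

section
/- Let F be a field, s ∈ F^n, μ a minimal polynomial of s with LC = deg(μ) and e = n + 1 - 2·LC > 0, μ(0) = 0, and let μ' be a minimal polynomial of the prefix (s_1,…,s_{n'}) where n' is maximal with LC(s_1,…,s_{n'}) < LC (so μ'(0) ≠ 0). Then for any polynomial q of degree e and any a ∈ F∖{0}, the polynomial q·μ + a·μ' is an annihilator of s of degree e + LC = n + 1 - LC with nonzero constant term, and this degree is minimal among annihilators of s not vanishing at 0. -/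
open Polynomial

/-!
Write `⟨f, t⟩ = shiftSum s t f = f₀ s_t + f₁ s_{t+1} + ⋯`, so that `f` annihilates `s` iff
`⟨f, t⟩ = 0` for `1 ≤ t ≤ n - deg f`. The identity
`⟨f g, t⟩ = Σ_k f_k ⟨g, t + k⟩ = Σ_l g_l ⟨f, t + l⟩` trades annihilation conditions between two
polynomials. Since `μ(0) = 0` and `μ` is minimal, `ν = μ / x` annihilates every window of `s` but
the first. Pairing `ν` with an annihilator `g` gives `g(0) ⟨ν, 1⟩ = 0` unless
`deg g ≥ n + 1 - LC`, and pairing it with `μ'` gives `μ'(0) ⟨ν, 1⟩ = lc(ν) Δ ≠ 0`, `Δ` being the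
discrepancy of `μ'` at `n' + 1`. Massey's jump identity `LC(s₁, …, s_{n'}) + LC = n' + 1` then
places the degrees so that `q μ + a μ'` annihilates `s`.
-/

open Finset

section ShiftSum

variable {R : Type*} [CommRing R] (s : ℕ → R)

noncomputable def shiftSum (t : ℕ) : R[X] →ₗ[R] R :=
  lsum fun k => LinearMap.mulRight R (s (t + k))

theorem shiftSum_eq_sum_range (t : ℕ) (f : R[X]) :
    shiftSum s t f = ∑ k ∈ range (f.natDegree + 1), f.coeff k * s (t + k) := by
  rw [shiftSum, lsum_apply, sum_over_range _ fun k => by simp]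
  simp only [LinearMap.mulRight_apply]

theorem shiftSum_monomial (t k : ℕ) (c : R) : shiftSum s t (monomial k c) = c * s (t + k) := by
  rw [shiftSum, lsum_apply, sum_monomial_index _ _ (by simp), LinearMap.mulRight_apply]

theorem shiftSum_X_pow_mul (t a : ℕ) (f : R[X]) :
    shiftSum s t (X ^ a * f) = shiftSum s (t + a) f := by
  induction f using Polynomial.induction_on' with
  | add p q hp hq => rw [mul_add, map_add, map_add, hp, hq]
  | monomial k c => rw [X_pow_mul_monomial, shiftSum_monomial, shiftSum_monomial, add_comm k,
      add_assoc]

theorem shiftSum_mul (t : ℕ) (f g : R[X]) :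
    shiftSum s t (f * g) = ∑ k ∈ range (f.natDegree + 1), f.coeff k * shiftSum s (t + k) g := by
  conv_lhs => rw [f.as_sum_range_C_mul_X_pow]
  rw [sum_mul, map_sum]
  refine sum_congr rfl fun k _ => ?_
  rw [mul_assoc, ← smul_eq_C_mul, map_smul, smul_eq_mul, shiftSum_X_pow_mul]

variable {s}

theorem shiftSum_mul_eq_zero {f g : R[X]} {t : ℕ}
    (h : ∀ k ≤ f.natDegree, shiftSum s (t + k) g = 0) : shiftSum s t (f * g) = 0 := by
  rw [shiftSum_mul]
  exact sum_eq_zero fun k hk => by rw [h k (Nat.lt_succ_iff.mp (mem_range.mp hk)), mul_zero]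

theorem shiftSum_mul_eq_single {f g : R[X]} {t : ℕ} (i : ℕ)
    (h : ∀ k ≤ f.natDegree, k ≠ i → shiftSum s (t + k) g = 0) :
    shiftSum s t (f * g) = f.coeff i * shiftSum s (t + i) g := by
  rw [shiftSum_mul, sum_eq_single i]
  · exact fun k hk hki => by rw [h k (Nat.lt_succ_iff.mp (mem_range.mp hk)) hki, mul_zero]
  · intro hi
    rw [coeff_eq_zero_of_natDegree_lt (by simpa [Nat.lt_succ_iff] using hi), zero_mul]

end ShiftSum

section Annihilates

variable {R : Type*} [CommRing R] {n m : ℕ} {s : ℕ → R} {f g : R[X]}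

theorem annihilates_iff :
    Annihilates n s f ↔ ∀ t, 1 ≤ t → t + f.natDegree ≤ n → shiftSum s t f = 0 := by
  constructor
  · rintro (rfl | h) t ht htn
    · exact map_zero _
    · simpa [shiftSum_eq_sum_range, Nat.add_sub_cancel] using h (t + f.natDegree) (by omega) htn
  · refine fun h => Or.inr fun j hj hjn => ?_
    simpa [shiftSum_eq_sum_range] using h (j - f.natDegree) (by omega) (by omega)

theorem Annihilates.shiftSum_eq_zero (h : Annihilates n s f) {t : ℕ} (ht : 1 ≤ t)
    (htn : t + f.natDegree ≤ n) : shiftSum s t f = 0 :=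
  annihilates_iff.mp h t ht htn

theorem Annihilates.mono (h : Annihilates n s f) (hmn : m ≤ n) : Annihilates m s f :=
  annihilates_iff.mpr fun _ ht htm => h.shiftSum_eq_zero ht (htm.trans hmn)

theorem annihilates_X_pow [Nontrivial R] (n : ℕ) (s : ℕ → R) : Annihilates n s (X ^ n) :=
  annihilates_iff.mpr fun t ht htn => absurd htn (by rw [natDegree_X_pow]; omega)

theorem Annihilates.mul_left [IsDomain R] (h : Annihilates n s g) (f : R[X]) :
    Annihilates n s (f * g) := by
  rcases eq_or_ne f 0 with rfl | hf
  · exact Or.inl (zero_mul g)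
  rcases eq_or_ne g 0 with rfl | hg
  · exact Or.inl (mul_zero f)
  refine annihilates_iff.mpr fun t ht htn => shiftSum_mul_eq_zero fun k hk => ?_
  rw [natDegree_mul hf hg] at htn
  exact h.shiftSum_eq_zero (by omega) (by omega)

theorem Annihilates.add_of_natDegree_lt (hf : Annihilates n s f) (hg : Annihilates m s g)
    (hlt : g.natDegree < f.natDegree) (hnm : n + g.natDegree ≤ m + f.natDegree) :
    Annihilates n s (f + g) := by
  refine annihilates_iff.mpr fun t ht htn => ?_
  rw [natDegree_add_eq_left_of_natDegree_lt hlt] at htn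
  rw [map_add, hf.shiftSum_eq_zero ht htn, hg.shiftSum_eq_zero ht (by omega), add_zero]

end Annihilates

section LinearComplexity

variable {R : Type*} [CommRing R] {n m : ℕ} {s : ℕ → R} {f g μ : R[X]}

theorem LC_le_natDegree (hf : f ≠ 0) (h : Annihilates n s f) : LC n s ≤ f.natDegree :=
  Nat.sInf_le ⟨f, hf, h, rfl⟩

theorem IsMinPoly.not_annihilates_succ (hμ : IsMinPoly m s μ) (h : LC m s < LC (m + 1) s) :
    ¬ Annihilates (m + 1) s μ :=
  fun hμ' => (LC_le_natDegree hμ.1 hμ').not_gt (hμ.2.2 ▸ h)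

theorem Annihilates.exists_shiftSum_ne_zero (h : Annihilates m s f)
    (h' : ¬ Annihilates (m + 1) s f) :
    ∃ t, 1 ≤ t ∧ t + f.natDegree = m + 1 ∧ shiftSum s t f ≠ 0 := by
  rw [annihilates_iff] at h'
  push Not at h'
  obtain ⟨t, ht, htm, hne⟩ := h'
  exact ⟨t, ht, by_contra fun htm' => hne (h.shiftSum_eq_zero ht (by omega)), hne⟩

variable [Nontrivial R] (n s)

theorem exists_isMinPoly : ∃ μ : R[X], IsMinPoly n s μ := by
  obtain ⟨μ, hμ⟩ := Nat.sInf_mem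
    (⟨n, X ^ n, (monic_X_pow n).ne_zero, annihilates_X_pow n s, natDegree_X_pow n⟩ :
      {d | ∃ f : R[X], f ≠ 0 ∧ Annihilates n s f ∧ f.natDegree = d}.Nonempty)
  exact ⟨μ, hμ⟩

theorem LC_le_self : LC n s ≤ n := by
  simpa using LC_le_natDegree (monic_X_pow n).ne_zero (annihilates_X_pow n s)

theorem LC_zero : LC 0 s = 0 :=
  Nat.le_zero.mp (LC_le_self 0 s)

variable {n s}

theorem LC_mono (h : m ≤ n) : LC m s ≤ LC n s := by
  obtain ⟨μ, hμ⟩ := exists_isMinPoly n s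
  exact hμ.2.2 ▸ LC_le_natDegree hμ.1 (hμ.2.1.mono h)

theorem exists_LC_jump (h : 0 < LC m s) :
    ∃ k < m, LC k s < LC m s ∧ LC (k + 1) s = LC m s := by
  classical
  have hex : ∃ k, LC m s ≤ LC k s := ⟨m, le_rfl⟩
  set k := Nat.find hex
  have hk0 : k ≠ 0 := fun hk => by
    have := Nat.find_spec hex
    rw [show Nat.find hex = 0 from hk, LC_zero] at this
    omega
  have hkm : k ≤ m := Nat.find_min' hex le_rfl
  refine ⟨k - 1, by omega, not_le.mp (Nat.find_min hex (by omega)), ?_⟩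
  rw [Nat.sub_add_cancel (Nat.one_le_iff_ne_zero.mpr hk0)]
  exact le_antisymm (LC_mono hkm) (Nat.find_spec hex)

end LinearComplexity

section Massey

variable {R : Type*} [CommRing R] [IsDomain R] {n m : ℕ} {s : ℕ → R} {f g : R[X]}

theorem Annihilates.add_one_le_natDegree_add (hf : Annihilates m s f)
    (hf' : ¬ Annihilates (m + 1) s f) (hg0 : g ≠ 0) (hg : Annihilates (m + 1) s g) :
    m + 1 ≤ f.natDegree + g.natDegree := by
  obtain ⟨t, ht, htm, hne⟩ := hf.exists_shiftSum_ne_zero hf'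
  by_contra! hlt
  -- At the window `t - deg g`, expanding `g * f` along `g` meets only the failing window of `f`,
  -- while expanding it along `f` meets only windows annihilated by `g`.
  have hgf : shiftSum s (t - g.natDegree) (g * f) = g.leadingCoeff * shiftSum s t f := by
    rw [shiftSum_mul_eq_single g.natDegree fun k hk hkg =>
      hf.shiftSum_eq_zero (by omega) (by omega), Nat.sub_add_cancel (by omega)]
    rfl
  have hfg : shiftSum s (t - g.natDegree) (f * g) = 0 :=
    shiftSum_mul_eq_zero fun l hl => hg.shiftSum_eq_zero (by omega) (by omega)
  rw [mul_comm, hfg] at hgf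
  exact mul_ne_zero (leadingCoeff_ne_zero.mpr hg0) hne hgf.symm

theorem add_one_le_LC_add_LC_succ (h : LC m s < LC (m + 1) s) :
    m + 1 ≤ LC m s + LC (m + 1) s := by
  obtain ⟨f, hf⟩ := exists_isMinPoly m s
  obtain ⟨g, hg⟩ := exists_isMinPoly (m + 1) s
  have := hf.2.1.add_one_le_natDegree_add (hf.not_annihilates_succ h) hg.1 hg.2.1
  rwa [hf.2.2, hg.2.2] at this

theorem LC_add_LC_succ_eq (hmax : LC (m + 1) s ≤ max (LC m s) (m + 1 - LC m s))
    (h : LC m s < LC (m + 1) s) : LC m s + LC (m + 1) s = m + 1 := by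
  have := add_one_le_LC_add_LC_succ h
  rcases le_max_iff.mp hmax with h' | h' <;> omega

/-- The Berlekamp–Massey update: if the complexity jumps to `d = LC m s` right after `k`, the
discrepancies `Δ, Δ₀` of minimal polynomials `f, f₀` of `s₁, …, sₘ` and `s₁, …, sₖ` cancel in
`Δ₀ X^(D - d) f - Δ X^(D - t) f₀` (with `t = m + 1 - d`), an annihilator of degree
`D = max d (m + 1 - d)`. -/
theorem LC_succ_le_max_of_jump {k : ℕ} (hkm : k < m) (hk : LC k s < LC m s)
    (hk1 : LC (k + 1) s = LC m s) (hjump : LC k s + LC m s = k + 1) :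
    LC (m + 1) s ≤ max (LC m s) (m + 1 - LC m s) := by
  obtain ⟨f, hf⟩ := exists_isMinPoly m s
  obtain ⟨f₀, hf₀⟩ := exists_isMinPoly k s
  by_cases hfa : Annihilates (m + 1) s f
  · exact hf.2.2 ▸ (LC_le_natDegree hf.1 hfa).trans (le_max_left _ _)
  obtain ⟨t, ht, htm, hΔ⟩ := hf.2.1.exists_shiftSum_ne_zero hfa
  obtain ⟨t₀, ht₀, ht₀k, hΔ₀⟩ :=
    hf₀.2.1.exists_shiftSum_ne_zero (hf₀.not_annihilates_succ (hk1 ▸ hk))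
  have hdf : f.natDegree = LC m s := hf.2.2
  have hdf₀ : f₀.natDegree = LC k s := hf₀.2.2
  set d := LC m s
  set D := max d t with hD
  have hdeg₁ : (C (shiftSum s t₀ f₀) * (X ^ (D - d) * f)).natDegree = D := by
    rw [natDegree_C_mul hΔ₀, natDegree_mul (pow_ne_zero _ X_ne_zero) hf.1, natDegree_X_pow]
    omega
  have hdeg₂ : (C (shiftSum s t f) * (X ^ (D - t) * f₀)).natDegree < D := by
    rw [natDegree_C_mul hΔ, natDegree_mul (pow_ne_zero _ X_ne_zero) hf₀.1, natDegree_X_pow]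
    omega
  set g := C (shiftSum s t₀ f₀) * (X ^ (D - d) * f) - C (shiftSum s t f) * (X ^ (D - t) * f₀)
  have hg : g.natDegree = D := by
    rw [natDegree_sub_eq_left_of_natDegree_lt (by rwa [hdeg₁]), hdeg₁]
  have hg0 : g ≠ 0 := fun h => by
    rw [h, natDegree_zero] at hg
    omega
  have hga : Annihilates (m + 1) s g := by
    refine annihilates_iff.mpr fun u hu hum => ?_
    rw [hg] at hum
    simp only [g, map_sub, ← smul_eq_C_mul, map_smul, smul_eq_mul, shiftSum_X_pow_mul]
    rcases Nat.lt_or_ge (u + D) (m + 1) with hlt | hge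
    · rw [hf.2.1.shiftSum_eq_zero (t := u + (D - d)) (by omega) (by omega),
        hf₀.2.1.shiftSum_eq_zero (t := u + (D - t)) (by omega) (by omega), mul_zero, mul_zero,
        sub_zero]
    · rw [show u + (D - d) = t by omega, show u + (D - t) = t₀ by omega, mul_comm, sub_self]
  calc LC (m + 1) s ≤ g.natDegree := LC_le_natDegree hg0 hga
    _ = max d (m + 1 - d) := by omega

theorem LC_succ_le_max (s : ℕ → R) (m : ℕ) : LC (m + 1) s ≤ max (LC m s) (m + 1 - LC m s) := by
  induction m using Nat.strong_induction_on with
  | _ m ih =>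
  rcases Nat.eq_zero_or_pos (LC m s) with h0 | hpos
  · rw [h0]
    exact (LC_le_self _ s).trans (le_max_right _ _)
  obtain ⟨k, hkm, hk, hk1⟩ := exists_LC_jump hpos
  have hjump := LC_add_LC_succ_eq (ih k hkm) (hk1 ▸ hk)
  exact LC_succ_le_max_of_jump hkm hk hk1 (hk1 ▸ hjump)

theorem LC_add_LC_succ_eq_of_lt (h : LC m s < LC (m + 1) s) : LC m s + LC (m + 1) s = m + 1 :=
  LC_add_LC_succ_eq (LC_succ_le_max s m) h

end Massey

section DivX

variable {R : Type*} [CommRing R] {n : ℕ} {s : ℕ → R} {μ : R[X]}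

theorem divX_ne_zero_of_coeff_zero (hμ : μ ≠ 0) (h0 : μ.coeff 0 = 0) : μ.divX ≠ 0 := by
  rwa [Ne, divX_eq_zero_iff, h0, C_0]

theorem natDegree_divX_add_one_of_coeff_zero (hμ : μ ≠ 0) (h0 : μ.coeff 0 = 0) :
    μ.divX.natDegree + 1 = μ.natDegree := by
  have : μ.natDegree ≠ 0 := fun hd => hμ (by rw [eq_C_of_natDegree_eq_zero hd, h0, C_0])
  rw [natDegree_divX_eq_natDegree_tsub_one]
  omega

theorem shiftSum_divX (h0 : μ.coeff 0 = 0) (t : ℕ) :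
    shiftSum s (t + 1) μ.divX = shiftSum s t μ := by
  conv_rhs => rw [← X_mul_divX_add μ, h0, C_0, add_zero, ← pow_one X, shiftSum_X_pow_mul]

theorem Annihilates.shiftSum_divX_eq_zero (h : Annihilates n s μ) (h0 : μ.coeff 0 = 0) {t : ℕ}
    (ht : 2 ≤ t) (htn : t + μ.natDegree ≤ n + 1) : shiftSum s t μ.divX = 0 := by
  obtain ⟨u, rfl⟩ : ∃ u, t = u + 1 := ⟨t - 1, by omega⟩
  rw [shiftSum_divX h0]
  exact h.shiftSum_eq_zero (by omega) (by omega)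

theorem IsMinPoly.shiftSum_divX_one_ne_zero (hμ : IsMinPoly n s μ) (h0 : μ.coeff 0 = 0) :
    shiftSum s 1 μ.divX ≠ 0 := by
  intro h1
  have hdeg := natDegree_divX_add_one_of_coeff_zero hμ.1 h0
  have hann : Annihilates n s μ.divX := annihilates_iff.mpr fun t ht htn => by
    rcases ht.eq_or_lt with rfl | ht2
    · exact h1
    · exact hμ.2.1.shiftSum_divX_eq_zero h0 ht2 (by omega)
  have := LC_le_natDegree (divX_ne_zero_of_coeff_zero hμ.1 h0) hann
  rw [← hμ.2.2] at this
  omega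

variable [IsDomain R]

/-- An annihilator with nonzero constant term is long: pairing it with `μ / X`, which annihilates
every window of `s` except the first, isolates its constant term. -/
theorem IsMinPoly.add_one_sub_LC_le_natDegree (hμ : IsMinPoly n s μ) (h0 : μ.coeff 0 = 0)
    {g : R[X]} (hg : Annihilates n s g) (hg0 : g.coeff 0 ≠ 0) :
    n + 1 - LC n s ≤ g.natDegree := by
  by_contra! hlt
  have hdeg := natDegree_divX_add_one_of_coeff_zero hμ.1 h0
  rw [hμ.2.2] at hdeg
  have h₁ : shiftSum s 1 (g * μ.divX) = g.coeff 0 * shiftSum s 1 μ.divX :=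
    shiftSum_mul_eq_single 0 fun k hk hk0 =>
      hμ.2.1.shiftSum_divX_eq_zero h0 (by omega) (by rw [hμ.2.2]; omega)
  have h₂ : shiftSum s 1 (μ.divX * g) = 0 :=
    shiftSum_mul_eq_zero fun l hl => hg.shiftSum_eq_zero (by omega) (by omega)
  rw [mul_comm, h₂] at h₁
  exact mul_ne_zero hg0 (hμ.shiftSum_divX_one_ne_zero h0) h₁.symm

/-- Pairing `μ / X` with a minimal polynomial `μ'` of the prefix before the last jump gives
`μ'(0) · ⟨μ / X, 1⟩ = lc(μ / X) · Δ`, where `Δ ≠ 0` is the discrepancy of `μ'` at the jump. -/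
theorem IsMinPoly.coeff_zero_ne_zero_of_jump (hμ : IsMinPoly n s μ) (h0 : μ.coeff 0 = 0)
    {m : ℕ} {μ' : R[X]} (hμ' : IsMinPoly m s μ') (hmn : m < n) (hm : LC m s < LC (m + 1) s)
    (hm1 : LC (m + 1) s = LC n s) : μ'.coeff 0 ≠ 0 := by
  have hjump := LC_add_LC_succ_eq_of_lt hm
  obtain ⟨t, ht, htm, hΔ⟩ := hμ'.2.1.exists_shiftSum_ne_zero (hμ'.not_annihilates_succ hm)
  have hdeg := natDegree_divX_add_one_of_coeff_zero hμ.1 h0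
  rw [hμ.2.2] at hdeg
  rw [hμ'.2.2] at htm
  have h₁ : shiftSum s 1 (μ' * μ.divX) = μ'.coeff 0 * shiftSum s 1 μ.divX :=
    shiftSum_mul_eq_single 0 fun k hk hk0 =>
      hμ.2.1.shiftSum_divX_eq_zero h0 (by omega) (by rw [hμ.2.2]; rw [hμ'.2.2] at hk; omega)
  have h₂ : shiftSum s 1 (μ.divX * μ') = μ.divX.leadingCoeff * shiftSum s t μ' := by
    rw [shiftSum_mul_eq_single μ.divX.natDegree fun l hl hlν =>
      hμ'.2.1.shiftSum_eq_zero (by omega) (by rw [hμ'.2.2]; omega)]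
    rw [show 1 + μ.divX.natDegree = t by omega]
    rfl
  rw [mul_comm, h₂] at h₁
  intro hc
  rw [hc, zero_mul] at h₁
  exact mul_ne_zero (leadingCoeff_ne_zero.mpr (divX_ne_zero_of_coeff_zero hμ.1 h0)) hΔ h₁

end DivX

theorem stmt_19_general {F : Type*} [Field F] (n : ℕ) (s : ℕ → F)
    (μ : Polynomial F) (hμ : IsMinPoly n s μ) (h0 : μ.eval 0 = 0)
    (he : 2 * LC n s < n + 1)
    (n' : ℕ) (hn'1 : n' < n) (hn'2 : LC n' s < LC n s)
    (hn'max : ∀ m : ℕ, m < n → LC m s < LC n s → m ≤ n')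
    (μ' : Polynomial F) (hμ' : IsMinPoly n' s μ')
    (q : Polynomial F) (hq : q.natDegree = n + 1 - 2 * LC n s)
    (a : F) (ha : a ≠ 0) :
    Annihilates n s (q * μ + Polynomial.C a * μ') ∧
    (q * μ + Polynomial.C a * μ').natDegree = n + 1 - LC n s ∧
    (q * μ + Polynomial.C a * μ').eval 0 ≠ 0 ∧
    (∀ g : Polynomial F, Annihilates n s g → g.eval 0 ≠ 0 →
      n + 1 - LC n s ≤ g.natDegree) := by
  have hμ0 : μ.coeff 0 = 0 := by rwa [coeff_zero_eq_eval_zero]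
  have hLC : LC (n' + 1) s = LC n s := by
    refine le_antisymm (LC_mono hn'1) (not_lt.mp fun h => ?_)
    rcases (show n' + 1 ≤ n from hn'1).lt_or_eq with h' | h'
    · exact (hn'max _ h' h).not_gt (Nat.lt_succ_self n')
    · exact h.ne (by rw [h'])
  have hjump := LC_add_LC_succ_eq_of_lt (hLC ▸ hn'2)
  rw [hLC] at hjump
  have hμ'0 := hμ.coeff_zero_ne_zero_of_jump hμ0 hμ' hn'1 (hLC ▸ hn'2) hLC
  have hq0 : q ≠ 0 := fun h => by
    rw [h, natDegree_zero] at hq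
    omega
  have hdeg₁ : (q * μ).natDegree = n + 1 - LC n s := by
    rw [natDegree_mul hq0 hμ.1, hq, hμ.2.2]
    omega
  have hdeg₂ : (C a * μ').natDegree = LC n' s := by rw [natDegree_C_mul ha, hμ'.2.2]
  have hlt : (C a * μ').natDegree < (q * μ).natDegree := by omega
  refine ⟨(hμ.2.1.mul_left q).add_of_natDegree_lt (hμ'.2.1.mul_left (C a)) hlt (by omega),
    by rw [natDegree_add_eq_left_of_natDegree_lt hlt, hdeg₁], ?_,
    fun g hg hg0 => hμ.add_one_sub_LC_le_natDegree hμ0 hg (by rwa [coeff_zero_eq_eval_zero])⟩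
  rw [eval_add, eval_mul, h0, mul_zero, zero_add, eval_mul, eval_C, ← coeff_zero_eq_eval_zero]
  exact mul_ne_zero ha hμ'0

theorem stmt_19 {F : Type*} [Field F] (n : ℕ) (s : ℕ → F)
    (μ : Polynomial F) (hμ : IsMinPoly n s μ) (h0 : μ.eval 0 = 0)
    (he : 2 * LC n s < n + 1)
    (n' : ℕ) (hn'1 : n' < n) (hn'2 : LC n' s < LC n s)
    (hn'max : ∀ m : ℕ, m < n → LC m s < LC n s → m ≤ n')
    (μ' : Polynomial F) (hμ' : IsMinPoly n' s μ')
    (q : Polynomial F) (hq : q.natDegree = n + 1 - 2 * LC n s) (hq0 : q ≠ 0)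
    (a : F) (ha : a ≠ 0) :
    Annihilates n s (q * μ + Polynomial.C a * μ') ∧
    (q * μ + Polynomial.C a * μ').natDegree = n + 1 - LC n s ∧
    (q * μ + Polynomial.C a * μ').eval 0 ≠ 0 ∧
    (∀ g : Polynomial F, Annihilates n s g → g.eval 0 ≠ 0 →
      n + 1 - LC n s ≤ g.natDegree) :=
  stmt_19_general n s μ hμ h0 he n' hn'1 hn'2 hn'max μ' hμ' q hq a ha
end
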